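/- Let n ≥ 1 and L, r > 0, and let X_1, …, X_n be independent random variables each uniformly distributed on [0, L]. Form the random graph G_0(n, L) on vertex set {0, X_1, …, X_n} (i.e., the graph G(n, L) augmented by a fixed node at the point 0) with an edge between two vertices whenever their distance is at most r. Then the probability that G_0(n, L) is connected equals ∑_{i=0}^{k_2} (−1)^i · C(n, i) · (1 − i r / L)^n, where k_2 = min(n, ⌊L/r⌋) and C(·,·) denotes the binomial coefficient. Equivalently, the probability (with respect to the uniform product measure on [0,L]^n) that every gap between consecutive order statistics of 0, X_1, …, X_n is at most r equals this sum. -/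

import Mathlib

/-!
`G₀(n, L)` is connected iff the points `0, x₁, …, xₙ` leave no gap longer than `r`. This
condition is symmetric in the `xᵢ`, so the connected part of the cube `(0, L]ⁿ` has `n!` times
the volume of its increasing chamber `0 < x₁ < ⋯ < xₙ ≤ L`. On that chamber the spacings
`gₖ = xₖ - xₖ₋₁` (with `x₀ = 0`) are a linear change of variables of determinant one, which
turns it into the corner simplex `{g > 0, ∑ g ≤ L}` cut by the constraints `gₖ ≤ r`.
Inclusion–exclusion over the violated constraints `gₖ > r` leaves translated simplices
`{g > 0, ∑ g ≤ L - k r}`, whose volume `(L - k r)ⁿ / n!` comes from the same symmetry argument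
applied to the cube `(0, L - k r]ⁿ`.
-/

open MeasureTheory Finset
open scoped Nat

def GapsLE (r : ℝ) (S : Set ℝ) : Prop :=
  ∀ a ∈ S, (∀ b ∈ S, b ≤ a) ∨ ∃ b ∈ S, a < b ∧ b ≤ a + r

theorem Monotone.gapsLE_range_iff {m : ℕ} {g : Fin (m + 1) → ℝ} (hg : Monotone g) {r : ℝ}
    (hr : 0 ≤ r) : GapsLE r (Set.range g) ↔ ∀ k : Fin m, g k.succ - g k.castSucc ≤ r := by
  constructor
  · intro h k
    by_contra! hk
    rcases h _ ⟨k.castSucc, rfl⟩ with hmax | ⟨_, ⟨p, rfl⟩, hlt, hle⟩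
    · linarith [hmax _ ⟨k.succ, rfl⟩]
    · have : g k.succ ≤ g p := hg (Fin.castSucc_lt_iff_succ_le.mp (hg.reflect_lt hlt))
      linarith
  · rintro h _ ⟨i, rfl⟩
    have key (k : Fin (m + 1)) : g k ≤ g i ∨ ∃ b ∈ Set.range g, g i < b ∧ b ≤ g i + r := by
      induction k using Fin.induction with
      | zero => exact .inl (hg (Fin.zero_le i))
      | succ k ih =>
        refine ih.elim (fun hk => ?_) .inr
        by_cases hk' : g k.succ ≤ g i
        · exact .inl hk'
        · exact .inr ⟨_, ⟨k.succ, rfl⟩, not_le.mp hk', by linarith [h k]⟩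
    refine (key (Fin.last m)).imp (fun hlast => ?_) id
    rintro _ ⟨j, rfl⟩
    exact (hg (Fin.le_last j)).trans hlast

theorem sorted_gaps_le_iff_gapsLE_range {m : ℕ} (f : Fin (m + 1) → ℝ) {r : ℝ} (hr : 0 ≤ r) :
    (∀ i j : Fin (m + 1), (i : ℕ) + 1 = j → f (Tuple.sort f j) - f (Tuple.sort f i) ≤ r) ↔
      GapsLE r (Set.range f) := by
  rw [← EquivLike.range_comp f (Tuple.sort f), (Tuple.monotone_sort f).gapsLE_range_iff hr]
  refine ⟨fun h k => h _ _ (by simp), fun h i j hij => ?_⟩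
  obtain ⟨k, rfl⟩ : ∃ k : Fin m, i = k.castSucc := ⟨⟨i, by omega⟩, rfl⟩
  obtain rfl : j = k.succ := Fin.ext (by simp [← hij])
  exact h k

theorem measurableSet_setOf_gapsLE_range {X ι : Type*} [MeasurableSpace X] [Fintype ι]
    {f : ι → X → ℝ} (hf : ∀ i, Measurable (f i)) (r : ℝ) :
    MeasurableSet {x | GapsLE r (Set.range fun i => f i x)} := by
  simp only [GapsLE, Set.forall_mem_range, Set.exists_range_iff, Set.ofPred_forall,
    Set.ofPred_or, Set.ofPred_exists, Set.ofPred_and]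
  exact .iInter fun i => .union (.iInter fun j => measurableSet_le (hf j) (hf i))
    (.iUnion fun j => (measurableSet_lt (hf i) (hf j)).inter
      (measurableSet_le (hf j) ((hf i).add_const r)))

theorem comp_perm_mem_univ_pi_iff {ι α : Type*} (s : Set α) (τ : Equiv.Perm ι) (x : ι → α) :
    x ∘ τ ∈ Set.univ.pi (fun _ => s) ↔ x ∈ Set.univ.pi (fun _ => s) := by
  simp only [Set.mem_univ_pi, Function.comp_apply]
  exact τ.forall_congr_right (q := fun i => x i ∈ s)

theorem volume_setOf_not_injective (ι : Type*) [Fintype ι] :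
    volume {x : ι → ℝ | ¬ Function.Injective x} = 0 := by
  classical
  have hsub : {x : ι → ℝ | ¬ Function.Injective x} ⊆
      ⋃ (i : ι) (j : ι) (_ : i ≠ j), (LinearMap.ker
        ((LinearMap.proj i : (ι → ℝ) →ₗ[ℝ] ℝ) - LinearMap.proj j) : Set (ι → ℝ)) := by
    intro x hx
    simp only [Function.Injective, not_forall] at hx
    obtain ⟨i, j, hij, hne⟩ := hx
    simpa [sub_eq_zero] using ⟨j, i, Ne.symm hne, hij.symm⟩
  refine measure_mono_null hsub (measure_iUnion_null fun i => measure_iUnion_null fun j =>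
    measure_iUnion_null fun hij => Measure.addHaar_submodule _ _ fun htop => ?_)
  have := htop ▸ Submodule.mem_top (x := (Pi.single i 1 : ι → ℝ))
  simp [Ne.symm hij] at this

theorem measurePreserving_comp_perm {ι : Type*} [Fintype ι] (τ : Equiv.Perm ι) :
    MeasurePreserving (fun x : ι → ℝ => x ∘ τ) :=
  volume_preserving_arrowCongr' τ.symm (MeasurableEquiv.refl ℝ) (.id volume)

theorem measurableSet_setOf_strictMono {ι : Type*} [Preorder ι] [Countable ι] :
    MeasurableSet {x : ι → ℝ | StrictMono x} := by
  simp only [StrictMono, Set.ofPred_forall]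
  exact .iInter fun a => .iInter fun b => .iInter fun _ =>
    measurableSet_lt (measurable_pi_apply a) (measurable_pi_apply b)

theorem volume_eq_factorial_mul_volume_inter_strictMono {n : ℕ} {W : Set (Fin n → ℝ)}
    (hW : MeasurableSet W) (hperm : ∀ (τ : Equiv.Perm (Fin n)) x, x ∘ τ ∈ W ↔ x ∈ W) :
    volume W = n ! * volume (W ∩ {x | StrictMono x}) := by
  set C : Equiv.Perm (Fin n) → Set (Fin n → ℝ) := fun τ => (· ∘ τ) ⁻¹' {x | StrictMono x}
  have hcover : W ∩ {x | Function.Injective x} = ⋃ τ, W ∩ C τ := by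
    ext x
    simp only [Set.mem_inter_iff, Set.mem_ofPred_eq, Set.mem_iUnion, Set.mem_preimage, C,
      exists_and_left]
    refine and_congr_right fun _ => ⟨fun hx => ⟨Tuple.sort x, ?_⟩, fun ⟨τ, hτ⟩ => ?_⟩
    · exact (Tuple.monotone_sort x).strictMono_of_injective (hx.comp (Tuple.sort x).injective)
    · exact (EquivLike.injective_comp τ x).mp hτ.injective
  have hdisj : Pairwise (Function.onFun Disjoint fun τ => W ∩ C τ) := by
    intro τ τ' hne
    refine Set.disjoint_left.mpr fun x ⟨_, hτ⟩ ⟨_, hτ'⟩ => hne ?_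
    have hx : Function.Injective x := (EquivLike.injective_comp τ x).mp hτ.injective
    have heq : x ∘ τ = x ∘ τ' := by
      rw [Tuple.comp_sort_eq_comp_iff_monotone.mpr hτ.monotone,
        Tuple.comp_sort_eq_comp_iff_monotone.mpr hτ'.monotone]
    exact Equiv.ext fun i => hx (congrFun heq i)
  have hchamber (τ : Equiv.Perm (Fin n)) :
      volume (W ∩ C τ) = volume (W ∩ {x | StrictMono x}) := by
    have hpre : W ∩ C τ = (· ∘ τ) ⁻¹' (W ∩ {x | StrictMono x}) := by
      ext x
      simp [C, hperm]
    rw [hpre, (measurePreserving_comp_perm τ).measure_preimage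
      (hW.inter measurableSet_setOf_strictMono).nullMeasurableSet]
  have hnull : volume {x : Fin n → ℝ | Function.Injective x}ᶜ = 0 := by
    simpa [Set.compl_ofPred] using volume_setOf_not_injective (Fin n)
  rw [← measure_inter_conull hnull, hcover, measure_iUnion hdisj fun τ =>
      hW.inter (measurableSet_setOf_strictMono.preimage (measurePreserving_comp_perm τ).measurable),
    tsum_fintype]
  simp [hchamber, Fintype.card_perm]

theorem Fin.cons_zero_add {n : ℕ} {α : Type*} [AddZeroClass α] (x y : Fin n → α) :
    (Fin.cons 0 (x + y) : Fin (n + 1) → α) = Fin.cons 0 x + Fin.cons 0 y :=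
  funext (Fin.cases (by simp) (by simp))

theorem Fin.cons_zero_smul {n : ℕ} {R α : Type*} [Zero α] [SMulZeroClass R α] (c : R)
    (x : Fin n → α) :
    (Fin.cons 0 (c • x) : Fin (n + 1) → α) = c • (Fin.cons 0 x : Fin (n + 1) → α) :=
  funext (Fin.cases (by simp) (by simp))

def spacings (n : ℕ) : (Fin n → ℝ) →ₗ[ℝ] Fin n → ℝ where
  toFun x k := x k - (Fin.cons 0 x : Fin (n + 1) → ℝ) k.castSucc
  map_add' x y := funext fun k => by simp only [Fin.cons_zero_add]; simp; ring
  map_smul' c x := funext fun k => by simp only [Fin.cons_zero_smul]; simp; ring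

theorem spacings_apply {n : ℕ} (x : Fin n → ℝ) (k : Fin n) :
    spacings n x k = x k - (Fin.cons 0 x : Fin (n + 1) → ℝ) k.castSucc := rfl

theorem det_spacings (n : ℕ) : LinearMap.det (spacings n) = 1 := by
  have hcons (j : Fin n) : (Fin.cons 0 (Pi.single j 1) : Fin (n + 1) → ℝ) = Pi.single j.succ 1 :=
    funext (Fin.cases (by simp) (by simp [Pi.single_apply]))
  rw [← LinearMap.det_toMatrix', Matrix.det_of_isLowerTriangular]
  · simp [LinearMap.toMatrix'_apply, spacings_apply, hcons, Fin.castSucc_lt_succ.ne]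
  · intro i j (hij : i < j)
    simp [LinearMap.toMatrix'_apply, spacings_apply, hcons, hij.ne,
      (Fin.castSucc_lt_succ_iff.mpr hij.le).ne]

theorem measurePreserving_spacings (n : ℕ) : MeasurePreserving (spacings n) := by
  refine ⟨(spacings n).continuous_of_finiteDimensional.measurable, ?_⟩
  rw [Measure.map_linearMap_addHaar_eq_smul_addHaar _ (by simp [det_spacings])]
  simp [det_spacings]

theorem partialSum_spacings {n : ℕ} (x : Fin n → ℝ) :
    Fin.partialSum (spacings n x) = Fin.cons 0 x := by
  have h := Fin.partialSum_left_neg (Fin.cons 0 x : Fin (n + 1) → ℝ)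
  simp only [Fin.cons_zero, zero_vadd, Fin.cons_succ, neg_add_eq_sub] at h
  exact h

theorem sum_spacings {n : ℕ} (x : Fin n → ℝ) :
    ∑ k, spacings n x k = (Fin.cons 0 x : Fin (n + 1) → ℝ) (Fin.last n) := by
  rw [← partialSum_spacings, Fin.partialSum, Fin.val_last, List.take_of_length_le (by simp),
    List.sum_ofFn]

theorem strictMono_fin_cons_zero_iff {n : ℕ} (x : Fin n → ℝ) :
    StrictMono (Fin.cons 0 x : Fin (n + 1) → ℝ) ↔ ∀ k, 0 < spacings n x k := by
  simp [Fin.strictMono_iff_lt_succ, spacings_apply]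

theorem mem_pi_Ioc_and_strictMono_iff {n : ℕ} {t : ℝ} (ht : 0 ≤ t) (x : Fin n → ℝ) :
    (x ∈ Set.univ.pi (fun _ => Set.Ioc 0 t) ∧ StrictMono x) ↔
      (∀ k, 0 < spacings n x k) ∧ ∑ k, spacings n x k ≤ t := by
  rw [← strictMono_fin_cons_zero_iff, sum_spacings, Fin.strictMono_cons]
  have hle : (∀ k, (Fin.cons 0 x : Fin (n + 1) → ℝ) k ≤ t) ↔ ∀ k, x k ≤ t := by
    simp [Fin.forall_fin_succ, ht]
  constructor
  · rintro ⟨hx, hmono⟩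
    exact ⟨⟨fun j => (hx j trivial).1, hmono⟩, hle.mpr (fun k => (hx k trivial).2) (Fin.last n)⟩
  · rintro ⟨⟨hpos, hmono⟩, hlast⟩
    have hcons : Monotone (Fin.cons 0 x : Fin (n + 1) → ℝ) :=
      (Fin.strictMono_cons.mpr ⟨hpos, hmono⟩).monotone
    exact ⟨fun k _ => ⟨hpos k, hle.mp (fun j => (hcons (Fin.le_last j)).trans hlast) k⟩, hmono⟩

def cornerSimplex (n : ℕ) (t : ℝ) : Set (Fin n → ℝ) :=
  {g | (∀ i, 0 < g i) ∧ ∑ i, g i ≤ t}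

theorem measurableSet_cornerSimplex (n : ℕ) (t : ℝ) : MeasurableSet (cornerSimplex n t) := by
  simp only [cornerSimplex, Set.ofPred_and, Set.ofPred_forall]
  exact (MeasurableSet.iInter fun i =>
    measurableSet_lt measurable_const (measurable_pi_apply i)).inter
      (measurableSet_le (by fun_prop) measurable_const)

theorem cornerSimplex_eq_empty {n : ℕ} {t : ℝ} (ht : t < 0) : cornerSimplex n t = ∅ :=
  Set.eq_empty_of_forall_notMem fun _ ⟨hpos, hsum⟩ =>
    (ht.trans_le (sum_nonneg fun i _ => (hpos i).le)).not_ge hsum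

theorem volume_cornerSimplex (n : ℕ) {t : ℝ} (ht : 0 ≤ t) :
    volume (cornerSimplex n t) = ENNReal.ofReal (t ^ n / n !) := by
  have hsymm := volume_eq_factorial_mul_volume_inter_strictMono (n := n)
    (.univ_pi fun _ => measurableSet_Ioc) (comp_perm_mem_univ_pi_iff (Set.Ioc 0 t))
  have hpre : Set.univ.pi (fun _ => Set.Ioc 0 t) ∩ {x | StrictMono x} =
      spacings n ⁻¹' cornerSimplex n t := Set.ext (mem_pi_Ioc_and_strictMono_iff ht)
  rw [hpre, (measurePreserving_spacings n).measure_preimage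
    (measurableSet_cornerSimplex n t).nullMeasurableSet, Real.volume_pi_Ioc] at hsymm
  simp only [sub_zero, prod_const, card_univ, Fintype.card_fin] at hsymm
  rw [ENNReal.ofReal_div_of_pos (by positivity), ENNReal.ofReal_pow ht, ENNReal.ofReal_natCast]
  exact (ENNReal.eq_div_iff (by positivity) (by simp)).mpr hsymm.symm

theorem volume_cornerSimplex_ne_top (n : ℕ) (t : ℝ) : volume (cornerSimplex n t) ≠ ⊤ := by
  rcases le_or_gt 0 t with ht | ht
  · simp [volume_cornerSimplex n ht]
  · simp [cornerSimplex_eq_empty ht]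

theorem volume_real_cornerSimplex (n : ℕ) (t : ℝ) :
    volume.real (cornerSimplex n t) = if 0 ≤ t then t ^ n / n ! else 0 := by
  split_ifs with ht
  · rw [measureReal_def, volume_cornerSimplex n ht, ENNReal.toReal_ofReal (by positivity)]
  · simp [cornerSimplex_eq_empty (not_le.mp ht)]

theorem measureReal_biInter_compl_eq_sum_powerset {X ι : Type*} [MeasurableSpace X]
    {μ : Measure X} [IsFiniteMeasure μ] {t : Finset ι} {s : ι → Set X}
    (hs : ∀ i ∈ t, MeasurableSet (s i)) :
    μ.real (⋂ i ∈ t, (s i)ᶜ) = ∑ u ∈ t.powerset, (-1 : ℝ) ^ #u * μ.real (⋂ i ∈ u, s i) := by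
  rw [← Set.compl_iUnion₂, measureReal_compl (measurableSet_biUnion _ hs),
    measureReal_biUnion_eq_sum_powerset hs,
    ← sum_filter_not_add_sum_filter t.powerset (·.Nonempty)]
  have hempty : {u ∈ t.powerset | ¬ u.Nonempty} = {∅} := by
    ext u
    simp +contextual [not_nonempty_iff_eq_empty]
  rw [hempty]
  simp [pow_succ, sum_neg_distrib, sub_eq_add_neg]

theorem biInter_lt_inter_cornerSimplex {n : ℕ} {r : ℝ} (hr : 0 ≤ r) (t : ℝ)
    (u : Finset (Fin n)) :
    (⋂ i ∈ u, {g : Fin n → ℝ | r < g i}) ∩ cornerSimplex n t =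
      (· + fun i => if i ∈ u then -r else 0) ⁻¹' cornerSimplex n (t - #u * r) := by
  ext g
  have hsum : ∑ i, (g i + if i ∈ u then -r else 0) = ∑ i, g i - #u * r := by
    rw [sum_add_distrib, sum_ite_mem, univ_inter, sum_const, nsmul_eq_mul]
    ring
  simp only [cornerSimplex, Set.mem_inter_iff, Set.mem_iInter, Set.mem_ofPred_eq,
    Set.mem_preimage, Pi.add_apply, hsum]
  constructor
  · rintro ⟨hu, hpos, hle⟩
    refine ⟨fun i => ?_, by linarith⟩
    split_ifs with hi
    · linarith [hu i hi]
    · simpa using hpos i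
  · rintro ⟨hpos, hle⟩
    have hpos' (i : Fin n) : 0 < g i := by
      have := hpos i
      split_ifs at this <;> linarith
    refine ⟨fun i hi => ?_, hpos', by linarith⟩
    simpa [hi] using hpos i

theorem volume_real_cornerSimplex_inter_forall_le {n : ℕ} {r : ℝ} (hr : 0 ≤ r) (t : ℝ) :
    volume.real (cornerSimplex n t ∩ {g | ∀ i, g i ≤ r}) =
      ∑ k ∈ range (n + 1), (-1) ^ k * n.choose k * volume.real (cornerSimplex n (t - k * r)) := by
  have : IsFiniteMeasure (volume.restrict (cornerSimplex n t)) :=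
    isFiniteMeasure_restrict.mpr (volume_cornerSimplex_ne_top n t)
  have hmeas (i : Fin n) : MeasurableSet {g : Fin n → ℝ | r < g i} :=
    measurableSet_lt measurable_const (measurable_pi_apply i)
  have hset : cornerSimplex n t ∩ {g | ∀ i, g i ≤ r} =
      (⋂ i ∈ (univ : Finset (Fin n)), {g : Fin n → ℝ | r < g i}ᶜ) ∩ cornerSimplex n t := by
    ext g
    simp [and_comm]
  have hterm (u : Finset (Fin n)) : (volume.restrict (cornerSimplex n t)).real
      (⋂ i ∈ u, {g : Fin n → ℝ | r < g i}) = volume.real (cornerSimplex n (t - #u * r)) := by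
    rw [measureReal_restrict_apply (u.measurableSet_biInter fun i _ => hmeas i),
      biInter_lt_inter_cornerSimplex hr, measureReal_def, measure_preimage_add_right,
      ← measureReal_def]
  rw [hset, ← measureReal_restrict_apply (measurableSet_biInter _ fun i _ => (hmeas i).compl),
    measureReal_biInter_compl_eq_sum_powerset fun i _ => hmeas i]
  simp_rw [hterm]
  rw [sum_powerset_apply_card (fun k => (-1 : ℝ) ^ k * volume.real (cornerSimplex n (t - k * r)))]
  simp only [card_univ, Fintype.card_fin, nsmul_eq_mul]
  exact sum_congr rfl fun k _ => by ring

theorem filter_range_natCast_mul_le {r L : ℝ} (hr : 0 < r) (hL : 0 ≤ L) (n : ℕ) :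
    (range (n + 1)).filter (fun k : ℕ => (k : ℝ) * r ≤ L) = range (min n ⌊L / r⌋₊ + 1) := by
  ext k
  simp [Nat.le_floor_iff (div_nonneg hL hr.le), le_div_iff₀ hr]

theorem factorial_mul_volume_real_cornerSimplex_inter_forall_le_div_pow {n : ℕ} {r L : ℝ}
    (hr : 0 < r) (hL : 0 < L) :
    n ! * volume.real (cornerSimplex n L ∩ {g | ∀ i, g i ≤ r}) / L ^ n =
      ∑ k ∈ range (min n ⌊L / r⌋₊ + 1), (-1) ^ k * n.choose k * (1 - k * r / L) ^ n := by
  rw [volume_real_cornerSimplex_inter_forall_le hr.le, ← filter_range_natCast_mul_le hr hL.le n,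
    sum_filter, mul_sum, sum_div]
  refine sum_congr rfl fun k _ => ?_
  rw [volume_real_cornerSimplex]
  simp only [sub_nonneg]
  split_ifs
  · rw [show 1 - (k : ℝ) * r / L = (L - k * r) / L by field_simp, div_pow]
    field_simp
  · simp

theorem measurable_fin_cons_zero_apply {n : ℕ} (k : Fin (n + 1)) :
    Measurable fun x : Fin n → ℝ => (Fin.cons 0 x : Fin (n + 1) → ℝ) k :=
  Fin.cases (by simp) (fun j => by simpa using measurable_pi_apply j) k

def connectedConfigs (n : ℕ) (r : ℝ) : Set (Fin n → ℝ) :=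
  {x | GapsLE r (Set.range (Fin.cons 0 x : Fin (n + 1) → ℝ))}

theorem measurableSet_connectedConfigs (n : ℕ) (r : ℝ) : MeasurableSet (connectedConfigs n r) :=
  measurableSet_setOf_gapsLE_range (f := fun k x => (Fin.cons 0 x : Fin (n + 1) → ℝ) k)
    measurable_fin_cons_zero_apply r

theorem connectedConfigs_inter_pi_Ioc_inter_strictMono {n : ℕ} {r L : ℝ} (hr : 0 ≤ r)
    (hL : 0 ≤ L) :
    connectedConfigs n r ∩ Set.univ.pi (fun _ => Set.Ioc 0 L) ∩ {x | StrictMono x} =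
      spacings n ⁻¹' (cornerSimplex n L ∩ {g | ∀ i, g i ≤ r}) := by
  ext x
  have hgaps (hpos : ∀ k, 0 < spacings n x k) :
      x ∈ connectedConfigs n r ↔ ∀ k, spacings n x k ≤ r := by
    rw [connectedConfigs, Set.mem_ofPred_eq,
      ((strictMono_fin_cons_zero_iff x).mpr hpos).monotone.gapsLE_range_iff hr]
    simp [spacings_apply]
  rw [Set.inter_assoc, Set.mem_inter_iff, Set.mem_inter_iff, Set.mem_ofPred_eq,
    mem_pi_Ioc_and_strictMono_iff hL]
  exact ⟨fun ⟨hx, hpos, hsum⟩ => ⟨⟨hpos, hsum⟩, (hgaps hpos).mp hx⟩,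
    fun ⟨⟨hpos, hsum⟩, hle⟩ => ⟨(hgaps hpos).mpr hle, hpos, hsum⟩⟩

theorem volume_connectedConfigs_inter_pi_Ioc {n : ℕ} {r L : ℝ} (hr : 0 ≤ r) (hL : 0 ≤ L) :
    volume (connectedConfigs n r ∩ Set.univ.pi (fun _ => Set.Ioc 0 L)) =
      n ! * volume (cornerSimplex n L ∩ {g | ∀ i, g i ≤ r}) := by
  have hperm (τ : Equiv.Perm (Fin n)) (x : Fin n → ℝ) :
      x ∘ τ ∈ connectedConfigs n r ↔ x ∈ connectedConfigs n r := by
    simp [connectedConfigs]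
  rw [volume_eq_factorial_mul_volume_inter_strictMono
      ((measurableSet_connectedConfigs n r).inter (.univ_pi fun _ => measurableSet_Ioc))
      fun τ x => and_congr (hperm τ x) (comp_perm_mem_univ_pi_iff _ τ x),
    connectedConfigs_inter_pi_Ioc_inter_strictMono hr hL,
    (measurePreserving_spacings n).measure_preimage ((measurableSet_cornerSimplex n L).inter
      (show MeasurableSet {g : Fin n → ℝ | ∀ i, g i ≤ r} from measurableSet_Iic)).nullMeasurableSet]

theorem MeasureTheory.Measure.pi_const_smul {ι X : Type*} [Fintype ι] [MeasurableSpace X]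
    (μ : Measure X) [IsFiniteMeasure μ] {c : ENNReal} (hc : c ≠ ⊤) :
    Measure.pi (fun _ : ι => c • μ) = c ^ Fintype.card ι • Measure.pi (fun _ : ι => μ) := by
  have := μ.smul_finite hc
  refine Measure.pi_eq fun s hs => ?_
  simp [Measure.pi_pi, prod_mul_distrib]

theorem pi_smul_volume_restrict_Icc {ι : Type*} [Fintype ι] {c : ENNReal} (hc : c ≠ ⊤)
    (a b : ℝ) :
    Measure.pi (fun _ : ι => c • volume.restrict (Set.Icc a b)) =
      c ^ Fintype.card ι • volume.restrict (Set.univ.pi fun _ : ι => Set.Ioc a b) := by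
  rw [← restrict_Ioc_eq_restrict_Icc, Measure.pi_const_smul _ hc, ← Measure.restrict_pi_pi,
    ← volume_pi]

theorem connectivity_prob_one_dim_access_point_general (n : ℕ) (L r : ℝ)
    (hL : 0 < L) (hr : 0 < r) :
    ((Measure.pi fun _ : Fin n =>
        (ENNReal.ofReal L)⁻¹ • volume.restrict (Set.Icc (0 : ℝ) L))
      {x : Fin n → ℝ | ∀ i j : Fin (n + 1), (i : ℕ) + 1 = (j : ℕ) →
          (Fin.cons 0 x : Fin (n + 1) → ℝ) (Tuple.sort (Fin.cons 0 x) j)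
            - (Fin.cons 0 x : Fin (n + 1) → ℝ) (Tuple.sort (Fin.cons 0 x) i) ≤ r}).toReal
      = ∑ i ∈ Finset.range (min n ⌊L / r⌋₊ + 1),
          (-1 : ℝ) ^ i * (n.choose i : ℝ) * (1 - (i : ℝ) * r / L) ^ n := by
  rw [show {x : Fin n → ℝ | _} = connectedConfigs n r from
      Set.ext fun x => sorted_gaps_le_iff_gapsLE_range _ hr.le,
    pi_smul_volume_restrict_Icc (by simp [hL]), Measure.smul_apply,
    Measure.restrict_apply (measurableSet_connectedConfigs n r),
    volume_connectedConfigs_inter_pi_Ioc hr.le hL.le,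
    ← factorial_mul_volume_real_cornerSimplex_inter_forall_le_div_pow hr hL, smul_eq_mul,
    ENNReal.toReal_mul, ENNReal.toReal_mul, ENNReal.toReal_pow, ENNReal.toReal_inv,
    ENNReal.toReal_ofReal hL.le, ENNReal.toReal_natCast, ← measureReal_def, Fintype.card_fin]
  ring

/-- For `n ≥ 1`, `L, r > 0` and `X_1, …, X_n` i.i.d. uniform on `[0, L]`,
the probability that the random geometric graph `G_0(n, L)` on `{0, X_1, …, X_n}`
(edge iff distance `≤ r`) is connected — equivalently, that every gap between
consecutive order statistics of `0, X_1, …, X_n` is at most `r` — equals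
`∑_{i=0}^{k₂} (-1)^i C(n, i) (1 - i r / L)^n` with `k₂ = min n ⌊L/r⌋`. -/
theorem connectivity_prob_one_dim_access_point (n : ℕ) (hn : 1 ≤ n) (L r : ℝ)
    (hL : 0 < L) (hr : 0 < r) :
    ((Measure.pi fun _ : Fin n =>
        (ENNReal.ofReal L)⁻¹ • volume.restrict (Set.Icc (0 : ℝ) L))
      {x : Fin n → ℝ | ∀ i j : Fin (n + 1), (i : ℕ) + 1 = (j : ℕ) →
          (Fin.cons 0 x : Fin (n + 1) → ℝ) (Tuple.sort (Fin.cons 0 x) j)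
            - (Fin.cons 0 x : Fin (n + 1) → ℝ) (Tuple.sort (Fin.cons 0 x) i) ≤ r}).toReal
      = ∑ i ∈ Finset.range (min n ⌊L / r⌋₊ + 1),
          (-1 : ℝ) ^ i * (n.choose i : ℝ) * (1 - (i : ℝ) * r / L) ^ n :=
  connectivity_prob_one_dim_access_point_general n L r hL hr
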